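/- arXiv:1008.3934 — 2 statements merged into one kernel-verified Lean document; each statement's English description precedes it below -/
import Mathlib

section
/- Let V be a nonempty finite set and let J, J' : V → V → ℝ be symmetric functions with zero diagonal such that J_{pq} ≥ |J'_{pq}| for all p, q. Let ⟨·⟩ and ⟨·⟩' denote the zero-field Gibbs expectations for the couplings J and J', respectively. Then for all subsets B, C ⊆ V: ⟨σ_B σ_C⟩ − ⟨σ_B σ_C⟩' ≥ | ⟨σ_B⟩⟨σ_C⟩' − ⟨σ_B⟩'⟨σ_C⟩ |. -/
open Finset

/-- The spin value (±1) associated to a Boolean configuration. -/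
noncomputable def spin {V : Type*} (s : V → Bool) : V → ℝ :=
  fun p => if s p then 1 else -1

/-- Zero-field Boltzmann weight of a spin configuration for couplings `J`. -/
noncomputable def zfWeight {V : Type*} [Fintype V] (J : V → V → ℝ) (s : V → Bool) : ℝ :=
  Real.exp ((1 / 2) * ∑ p, ∑ q, J p q * spin s p * spin s q)

/-- Zero-field Gibbs expectation of an observable `f` for couplings `J`. -/
noncomputable def zfExpect {V : Type*} [Fintype V] [DecidableEq V]
    (J : V → V → ℝ) (f : (V → ℝ) → ℝ) : ℝ :=
  (∑ s : V → Bool, f (spin s) * zfWeight J s) / ∑ s : V → Bool, zfWeight J s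

section Aux

open scoped symmDiff
set_option linter.unusedSectionVars false

variable {V : Type*} [Fintype V] [DecidableEq V]

lemma spin_cases (s : V → Bool) (p : V) : spin s p = 1 ∨ spin s p = -1 := by
  unfold spin; by_cases h : s p <;> simp [h]

lemma spin_sq (s : V → Bool) (p : V) : spin s p * spin s p = 1 := by
  rcases spin_cases s p with h | h <;> rw [h] <;> norm_num

lemma prodSpin_cases (s : V → Bool) (A : Finset V) :
    (∏ p ∈ A, spin s p) = 1 ∨ (∏ p ∈ A, spin s p) = -1 := by
  refine Finset.prod_induction _ (fun x => x = 1 ∨ x = -1) ?_ (Or.inl rfl)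
    (fun p _ => spin_cases s p)
  rintro a b (ha | ha) (hb | hb) <;> rw [ha, hb] <;> norm_num

lemma prodSpin_mul (s : V → Bool) (A B : Finset V) :
    (∏ p ∈ A, spin s p) * (∏ p ∈ B, spin s p) = ∏ p ∈ A ∆ B, spin s p := by
  classical
  have h1 : ∀ (X : Finset V), ∏ p ∈ X, spin s p =
      (∏ p ∈ X \ B, spin s p) * ∏ p ∈ X ∩ B, spin s p := by
    intro X
    rw [← Finset.prod_union (Finset.disjoint_sdiff_inter X B), Finset.sdiff_union_inter]
  have h2 : ∏ p ∈ B, spin s p =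
      (∏ p ∈ B \ A, spin s p) * ∏ p ∈ A ∩ B, spin s p := by
    rw [Finset.inter_comm,
      ← Finset.prod_union (Finset.disjoint_sdiff_inter B A), Finset.sdiff_union_inter]
  rw [h1 A, h2]
  have h3 : (∏ p ∈ A ∩ B, spin s p) * ∏ p ∈ A ∩ B, spin s p = 1 := by
    rw [← Finset.prod_mul_distrib]
    exact Finset.prod_eq_one (fun p _ => spin_sq s p)
  have h4 : A ∆ B = (A \ B) ∪ (B \ A) := rfl
  rw [h4, Finset.prod_union disjoint_sdiff_sdiff]
  calc (∏ p ∈ A \ B, spin s p) * (∏ p ∈ A ∩ B, spin s p) *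
        ((∏ p ∈ B \ A, spin s p) * ∏ p ∈ A ∩ B, spin s p)
      = (∏ p ∈ A \ B, spin s p) * (∏ p ∈ B \ A, spin s p) *
        ((∏ p ∈ A ∩ B, spin s p) * ∏ p ∈ A ∩ B, spin s p) := by ring
    _ = (∏ p ∈ A \ B, spin s p) * (∏ p ∈ B \ A, spin s p) := by rw [h3, mul_one]

lemma sum_prodSpin_nonneg (A : Finset V) :
    0 ≤ ∑ s : V → Bool, ∏ p ∈ A, spin s p := by
  have h : ∀ s : V → Bool, (∏ p ∈ A, spin s p) =
      ∏ p : V, (if p ∈ A then spin s p else 1) := by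
    intro s; rw [Finset.prod_ite_mem, Finset.univ_inter]
  simp_rw [h]
  have hps := Finset.prod_univ_sum (fun _ : V => (Finset.univ : Finset Bool))
    (fun p b => if p ∈ A then (if b then (1:ℝ) else -1) else 1)
  rw [Fintype.piFinset_univ] at hps
  have hswap : ∑ s : V → Bool, ∏ p : V, (if p ∈ A then spin s p else 1)
      = ∏ p : V, ∑ b : Bool, (if p ∈ A then (if b then (1:ℝ) else -1) else 1) := by
    rw [hps]; rfl
  rw [hswap]
  apply Finset.prod_nonneg
  intro p _
  by_cases h : p ∈ A <;> simp [h]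

/-- Key expansion lemma. -/
lemma key_nonneg {ι : Type*} (E : Finset ι) (D : ι → Finset V) (a b : ι → ℝ)
    (ha : ∀ e ∈ E, 0 ≤ a e) (hb : ∀ e ∈ E, 0 ≤ b e) (A : Finset V) :
    0 ≤ ∑ s : V → Bool, (∏ p ∈ A, spin s p) *
        ∏ e ∈ E, (a e + b e * ∏ p ∈ D e, spin s p) := by
  classical
  induction E using Finset.cons_induction generalizing A with
  | empty => simpa using sum_prodSpin_nonneg A
  | cons e E he ih =>
    have step : ∀ s : V → Bool,
        (∏ p ∈ A, spin s p) * ∏ f ∈ Finset.cons e E he, (a f + b f * ∏ p ∈ D f, spin s p)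
        = a e * ((∏ p ∈ A, spin s p) * ∏ f ∈ E, (a f + b f * ∏ p ∈ D f, spin s p))
          + b e * ((∏ p ∈ A ∆ D e, spin s p) * ∏ f ∈ E, (a f + b f * ∏ p ∈ D f, spin s p)) := by
      intro s
      rw [Finset.prod_cons, ← prodSpin_mul s A (D e)]
      ring
    simp_rw [step]
    rw [Finset.sum_add_distrib, ← Finset.mul_sum, ← Finset.mul_sum]
    have ha' := fun f hf => ha f (Finset.mem_cons_of_mem hf)
    have hb' := fun f hf => hb f (Finset.mem_cons_of_mem hf)
    have h1 := ih ha' hb' A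
    have h2 := ih ha' hb' (A ∆ D e)
    have hae := ha e (Finset.mem_cons_self e E)
    have hbe := hb e (Finset.mem_cons_self e E)
    positivity

/-- The weight as a product over pairs. -/
lemma zfWeight_eq_prod (K : V → V → ℝ) (s : V → Bool) :
    zfWeight K s = ∏ e : V × V,
      (Real.cosh ((1/2) * K e.1 e.2) +
       Real.sinh ((1/2) * K e.1 e.2) * ∏ p ∈ ({e.1} : Finset V) ∆ {e.2}, spin s p) := by
  unfold zfWeight
  rw [Finset.mul_sum]
  simp_rw [Finset.mul_sum]
  rw [← Fintype.sum_prod_type (fun e : V × V => (1/2) * (K e.1 e.2 * spin s e.1 * spin s e.2)),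
    Real.exp_sum]
  apply Finset.prod_congr rfl
  intro e _
  have hm : ∏ p ∈ ({e.1} : Finset V) ∆ {e.2}, spin s p = spin s e.1 * spin s e.2 := by
    rw [← prodSpin_mul s {e.1} {e.2}, Finset.prod_singleton, Finset.prod_singleton]
  rw [hm]
  set c := (1/2) * K e.1 e.2
  have hx : spin s e.1 * spin s e.2 = 1 ∨ spin s e.1 * spin s e.2 = -1 := by
    rcases spin_cases s e.1 with h1 | h1 <;> rcases spin_cases s e.2 with h2 | h2 <;>
      rw [h1, h2] <;> norm_num
  have harg : (1/2) * (K e.1 e.2 * spin s e.1 * spin s e.2) = c * (spin s e.1 * spin s e.2) := by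
    simp only [c]; ring
  rw [harg]
  rcases hx with h | h <;> rw [h]
  · rw [mul_one, mul_one, Real.cosh_add_sinh]
  · rw [mul_neg_one, mul_neg_one, ← sub_eq_add_neg, Real.cosh_sub_sinh]

/-- Griffiths-type positivity of the numerator for nonnegative couplings. -/
lemma griffiths (K : V → V → ℝ) (hK : ∀ p q, 0 ≤ K p q) (A : Finset V) :
    0 ≤ ∑ s : V → Bool, (∏ p ∈ A, spin s p) * zfWeight K s := by
  simp_rw [zfWeight_eq_prod K]
  exact key_nonneg Finset.univ (fun e : V × V => ({e.1} : Finset V) ∆ {e.2})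
    (fun e => Real.cosh ((1/2) * K e.1 e.2)) (fun e => Real.sinh ((1/2) * K e.1 e.2))
    (fun e _ => (Real.cosh_pos _).le)
    (fun e _ => by
      rw [← Real.sinh_zero]
      exact Real.sinh_le_sinh.mpr (mul_nonneg (by norm_num) (hK _ _))) A

/-- Flip `s` at the sites where `q` is `false`. -/
def sflip (s q : V → Bool) : V → Bool := fun p => s p == q p

lemma spin_sflip (s q : V → Bool) (p : V) :
    spin (sflip s q) p = spin s p * spin q p := by
  unfold spin sflip
  cases hs : s p <;> cases hq : q p <;> simp [hs, hq]

lemma sflip_involutive (s : V → Bool) : Function.Involutive (sflip s) := by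
  intro q; funext p; unfold sflip; cases s p <;> cases q p <;> rfl

/-- The effective coupling after conditioning on the overlap variable `q`. -/
noncomputable def Kq (J J' : V → V → ℝ) (q : V → Bool) : V → V → ℝ :=
  fun p₁ p₂ => J p₁ p₂ + J' p₁ p₂ * (spin q p₁ * spin q p₂)

lemma weight_mul (J J' : V → V → ℝ) (s q : V → Bool) :
    zfWeight J s * zfWeight J' (sflip s q) = zfWeight (Kq J J' q) s := by
  unfold zfWeight Kq
  rw [← Real.exp_add]
  congr 1
  rw [← mul_add, ← Finset.sum_add_distrib]
  congr 1
  apply Finset.sum_congr rfl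
  intro p _
  rw [← Finset.sum_add_distrib]
  apply Finset.sum_congr rfl
  intro r _
  rw [spin_sflip, spin_sflip]
  ring

/-- Correlation numerator. -/
noncomputable def corrSum (J : V → V → ℝ) (A : Finset V) : ℝ :=
  ∑ s : V → Bool, (∏ p ∈ A, spin s p) * zfWeight J s

/-- Doubling identity. -/
lemma doubling (J J' : V → V → ℝ) (A A' : Finset V) :
    corrSum J A * corrSum J' A' =
    ∑ q : V → Bool, (∏ p ∈ A', spin q p) *
      ∑ s : V → Bool, (∏ p ∈ A ∆ A', spin s p) * zfWeight (Kq J J' q) s := by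
  unfold corrSum
  rw [Finset.sum_mul_sum]
  have inner : ∀ s : V → Bool,
      ∑ s' : V → Bool, ((∏ p ∈ A, spin s p) * zfWeight J s) *
          ((∏ p ∈ A', spin s' p) * zfWeight J' s')
      = ∑ q : V → Bool, (∏ p ∈ A', spin q p) *
          ((∏ p ∈ A ∆ A', spin s p) * zfWeight (Kq J J' q) s) := by
    intro s
    refine (Fintype.sum_bijective (sflip s) (sflip_involutive s).bijective _ _ ?_).symm
    intro q
    have h2 : ∏ p ∈ A', spin (sflip s q) p = (∏ p ∈ A', spin s p) * ∏ p ∈ A', spin q p := by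
      rw [← Finset.prod_mul_distrib]
      exact Finset.prod_congr rfl (fun p _ => spin_sflip s q p)
    rw [h2, ← prodSpin_mul s A A', ← weight_mul J J' s q]
    ring
  simp_rw [inner]
  rw [Finset.sum_comm]
  exact Finset.sum_congr rfl (fun q _ => (Finset.mul_sum _ _ _).symm)

/-- The numerator-level inequality. -/
lemma numer_ineq (J J' : V → V → ℝ) (hJ : ∀ p q, |J' p q| ≤ J p q) (B C : Finset V) :
    |corrSum J B * corrSum J' C - corrSum J' B * corrSum J C|
      ≤ corrSum J (B ∆ C) * corrSum J' ∅ - corrSum J ∅ * corrSum J' (B ∆ C) := by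
  classical
  -- nonnegativity of the effective couplings
  have hKq : ∀ (q : V → Bool) (p₁ p₂ : V), 0 ≤ Kq J J' q p₁ p₂ := by
    intro q p₁ p₂
    unfold Kq
    have h := hJ p₁ p₂
    have h1 := le_abs_self (J' p₁ p₂)
    have h2 := neg_abs_le (J' p₁ p₂)
    rcases spin_cases q p₁ with e1 | e1 <;> rcases spin_cases q p₂ with e2 | e2 <;>
      rw [e1, e2] <;> nlinarith
  set G : (V → Bool) → ℝ :=
    fun q => ∑ s : V → Bool, (∏ p ∈ B ∆ C, spin s p) * zfWeight (Kq J J' q) s with hG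
  have hGpos : ∀ q, 0 ≤ G q := fun q => griffiths (Kq J J' q) (hKq q) (B ∆ C)
  set τB : (V → Bool) → ℝ := fun q => ∏ p ∈ B, spin q p with hτB
  set τC : (V → Bool) → ℝ := fun q => ∏ p ∈ C, spin q p with hτC
  -- the four doubling identities
  have d1 : corrSum J (B ∆ C) * corrSum J' ∅ = ∑ q : V → Bool, G q := by
    rw [doubling]
    apply Finset.sum_congr rfl
    intro q _
    rw [Finset.prod_empty, one_mul, hG]
    simp only
    congr 1
    rw [← Finset.bot_eq_empty, symmDiff_bot]
  have d2 : corrSum J B * corrSum J' C = ∑ q : V → Bool, τC q * G q := by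
    rw [doubling]
  have d3 : corrSum J' B * corrSum J C = ∑ q : V → Bool, τB q * G q := by
    rw [mul_comm, doubling]
    apply Finset.sum_congr rfl
    intro q _
    congr 1
    rw [hG]
    simp only
    congr 1
    rw [symmDiff_comm]
  have d4 : corrSum J ∅ * corrSum J' (B ∆ C) = ∑ q : V → Bool, (τB q * τC q) * G q := by
    rw [doubling]
    apply Finset.sum_congr rfl
    intro q _
    rw [← prodSpin_mul q B C]
    congr 1
    rw [hG]
    simp only
    congr 1
    rw [← Finset.bot_eq_empty, bot_symmDiff]
  have hτB1 : ∀ q, τB q = 1 ∨ τB q = -1 := fun q => prodSpin_cases q B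
  have hτC1 : ∀ q, τC q = 1 ∨ τC q = -1 := fun q => prodSpin_cases q C
  have hplus : 0 ≤ ∑ q : V → Bool, ((1 - τB q) * (1 + τC q)) * G q := by
    refine Finset.sum_nonneg fun q _ => mul_nonneg (mul_nonneg ?_ ?_) (hGpos q)
    · rcases hτB1 q with h | h <;> rw [h] <;> norm_num
    · rcases hτC1 q with h | h <;> rw [h] <;> norm_num
  have hminus : 0 ≤ ∑ q : V → Bool, ((1 + τB q) * (1 - τC q)) * G q := by
    refine Finset.sum_nonneg fun q _ => mul_nonneg (mul_nonneg ?_ ?_) (hGpos q)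
    · rcases hτB1 q with h | h <;> rw [h] <;> norm_num
    · rcases hτC1 q with h | h <;> rw [h] <;> norm_num
  have eplus : ∑ q : V → Bool, ((1 - τB q) * (1 + τC q)) * G q
      = ((∑ q : V → Bool, G q) + (∑ q : V → Bool, τC q * G q))
        - ((∑ q : V → Bool, τB q * G q) + (∑ q : V → Bool, (τB q * τC q) * G q)) := by
    rw [← Finset.sum_add_distrib, ← Finset.sum_add_distrib, ← Finset.sum_sub_distrib]
    exact Finset.sum_congr rfl fun q _ => by ring
  have eminus : ∑ q : V → Bool, ((1 + τB q) * (1 - τC q)) * G q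
      = ((∑ q : V → Bool, G q) + (∑ q : V → Bool, τB q * G q))
        - ((∑ q : V → Bool, τC q * G q) + (∑ q : V → Bool, (τB q * τC q) * G q)) := by
    rw [← Finset.sum_add_distrib, ← Finset.sum_add_distrib, ← Finset.sum_sub_distrib]
    exact Finset.sum_congr rfl fun q _ => by ring
  rw [abs_le]
  constructor <;> linarith

end Aux

open scoped symmDiff in
/-- The basic comparison inequality
`⟨σ_B σ_C⟩ − ⟨σ_B σ_C⟩' ≥ | ⟨σ_B⟩⟨σ_C⟩' − ⟨σ_B⟩'⟨σ_C⟩ |`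
whenever `J_{pq} ≥ |J'_{pq}|` for all `p, q`. -/
theorem basic_spin_inequality {V : Type*} [Fintype V] [DecidableEq V] [Nonempty V]
    (J J' : V → V → ℝ)
    (hsymm : ∀ p q, J p q = J q p) (hdiag : ∀ p, J p p = 0)
    (hsymm' : ∀ p q, J' p q = J' q p) (hdiag' : ∀ p, J' p p = 0)
    (hJ : ∀ p q, |J' p q| ≤ J p q)
    (B C : Finset V) :
    |zfExpect J (fun σ => ∏ p ∈ B, σ p) * zfExpect J' (fun σ => ∏ p ∈ C, σ p) -
        zfExpect J' (fun σ => ∏ p ∈ B, σ p) * zfExpect J (fun σ => ∏ p ∈ C, σ p)|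
      ≤ zfExpect J (fun σ => (∏ p ∈ B, σ p) * ∏ p ∈ C, σ p) -
        zfExpect J' (fun σ => (∏ p ∈ B, σ p) * ∏ p ∈ C, σ p) := by
  classical
  have hden : ∀ K : V → V → ℝ, corrSum K (∅ : Finset V) = ∑ s : V → Bool, zfWeight K s := by
    intro K; unfold corrSum; simp
  have hZ : 0 < corrSum J (∅ : Finset V) := by
    rw [hden]
    exact Finset.sum_pos (fun s _ => Real.exp_pos _) Finset.univ_nonempty
  have hZ' : 0 < corrSum J' (∅ : Finset V) := by
    rw [hden]
    exact Finset.sum_pos (fun s _ => Real.exp_pos _) Finset.univ_nonempty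
  have hE : ∀ (K : V → V → ℝ) (A : Finset V),
      zfExpect K (fun σ => ∏ p ∈ A, σ p) = corrSum K A / corrSum K ∅ := by
    intro K A; rw [hden]; rfl
  have hE2 : ∀ (K : V → V → ℝ),
      zfExpect K (fun σ => (∏ p ∈ B, σ p) * ∏ p ∈ C, σ p)
        = corrSum K (B ∆ C) / corrSum K ∅ := by
    intro K
    rw [hden]
    unfold zfExpect corrSum
    congr 1
    exact Finset.sum_congr rfl fun s _ => by simp only [prodSpin_mul]
  rw [hE J B, hE J' C, hE J' B, hE J C, hE2 J, hE2 J']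
  rw [div_mul_div_comm, div_mul_div_comm,
    mul_comm (corrSum J' ∅) (corrSum J ∅), ← sub_div,
    div_sub_div _ _ hZ.ne' hZ'.ne']
  rw [abs_div, abs_of_pos (mul_pos hZ hZ'),
    div_le_div_iff_of_pos_right (mul_pos hZ hZ')]
  exact numer_ineq J J' hJ B C
end

section
/- Let V be a nonempty finite set and let J, J' : V → V → ℝ be symmetric functions with zero diagonal such that J_{pq} ≥ |J'_{pq}| for all p, q. Let ⟨·⟩_J and ⟨·⟩_{J'} be the corresponding zero-field Gibbs expectations. Then for all vertices u, v ∈ V: ⟨σ_u σ_v⟩_J + ⟨σ_u σ_v⟩_{J'} ≥ 0, and consequently |⟨σ_u σ_v⟩_{J'}| ≤ ⟨σ_u σ_v⟩_J. -/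
open Finset

lemma spin_mul_self {V : Type*} (s : V → Bool) (p : V) : spin s p * spin s p = 1 := by
  unfold spin; cases s p <;> norm_num

lemma abs_spin {V : Type*} (s : V → Bool) (p : V) : |spin s p| = 1 := by
  unfold spin; cases s p <;> norm_num

lemma spin_beq {V : Type*} (s a : V → Bool) (p : V) :
    spin (fun q => s q == a q) p = spin s p * spin a p := by
  unfold spin; cases hs : s p <;> cases ha : a p <;> simp [hs, ha]

/-- Sum over all configurations of a monomial of spins is nonnegative. -/
lemma sum_mono_nonneg {V : Type*} [Fintype V] [DecidableEq V] (M : Multiset V) :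
    0 ≤ ∑ s : V → Bool, (M.map (spin s)).prod := by
  have key : ∀ s : V → Bool, (M.map (spin s)).prod
      = ∏ p : V, spin s p ^ (M.count p) := by
    intro s
    have h1 : (M.map (spin s)).prod = ∏ m ∈ M.toFinset, spin s m ^ M.count m :=
      Finset.prod_multiset_map_count M (spin s)
    rw [h1]
    refine Finset.prod_subset (Finset.subset_univ _) ?_
    intro p _ hp
    rw [Multiset.count_eq_zero_of_notMem (by simpa using hp), pow_zero]
  simp only [key]
  simp only [spin]
  have e := Fintype.prod_sum (fun (p : V) (b : Bool) => (if b then (1:ℝ) else -1) ^ M.count p)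
  rw [← e]
  apply Finset.prod_nonneg
  intro p _
  rw [Fintype.sum_bool]
  norm_num
  rcases Nat.even_or_odd (M.count p) with h | h
  · rw [h.neg_one_pow]; norm_num
  · rw [h.neg_one_pow]; norm_num

lemma half_double_sum {V : Type*} [Fintype V] [DecidableEq V] [LinearOrder V]
    (f : V → V → ℝ) (hs : ∀ p q, f p q = f q p) (hd : ∀ p, f p p = 0) :
    (1/2 : ℝ) * ∑ p, ∑ q, f p q
      = ∑ e ∈ (univ : Finset (V × V)).filter (fun e => e.1 < e.2), f e.1 e.2 := by
  have h0 : ∑ p, ∑ q, f p q = ∑ e ∈ (univ : Finset (V × V)), f e.1 e.2 := by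
    rw [← Finset.univ_product_univ, Finset.sum_product]
  rw [h0]
  rw [← Finset.sum_filter_add_sum_filter_not (univ : Finset (V × V)) (fun e => e.1 < e.2)]
  have h1 : ∑ e ∈ (univ : Finset (V × V)).filter (fun e => ¬ e.1 < e.2), f e.1 e.2
      = ∑ e ∈ ((univ : Finset (V × V)).filter (fun e => ¬ e.1 < e.2)).filter
          (fun e => e.1 = e.2), f e.1 e.2
      + ∑ e ∈ ((univ : Finset (V × V)).filter (fun e => ¬ e.1 < e.2)).filter
          (fun e => ¬ e.1 = e.2), f e.1 e.2 :=
    (Finset.sum_filter_add_sum_filter_not _ _ _).symm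
  have h2 : ∑ e ∈ ((univ : Finset (V × V)).filter (fun e => ¬ e.1 < e.2)).filter
      (fun e => e.1 = e.2), f e.1 e.2 = 0 := by
    apply Finset.sum_eq_zero
    intro e he
    simp only [Finset.mem_filter] at he
    rw [he.2, hd]
  have h3 : ((univ : Finset (V × V)).filter (fun e => ¬ e.1 < e.2)).filter
      (fun e => ¬ e.1 = e.2) = (univ : Finset (V × V)).filter (fun e => e.2 < e.1) := by
    ext e
    simp only [Finset.mem_filter, Finset.mem_univ, true_and]
    constructor
    · rintro ⟨h, h'⟩
      exact lt_of_le_of_ne (not_lt.mp h) (Ne.symm h')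
    · intro h
      exact ⟨not_lt.mpr h.le, fun he => absurd he.symm (ne_of_lt h)⟩
  have h4 : ∑ e ∈ (univ : Finset (V × V)).filter (fun e => e.2 < e.1), f e.1 e.2
      = ∑ e ∈ (univ : Finset (V × V)).filter (fun e => e.1 < e.2), f e.1 e.2 := by
    apply Finset.sum_nbij' (fun e => Prod.swap e) (fun e => Prod.swap e)
    · intro e he; simp only [Finset.mem_filter, Finset.mem_univ, true_and] at he ⊢; exact he
    · intro e he; simp only [Finset.mem_filter, Finset.mem_univ, true_and] at he ⊢; exact he
    · intro e _; simp
    · intro e _; simp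
    · intro e _; exact hs e.1 e.2
  rw [h1, h2, h3, h4]
  ring

lemma gks1 {V : Type*} [Fintype V] [DecidableEq V] [LinearOrder V]
    (K : V → V → ℝ) (hs : ∀ p q, K p q = K q p) (hd : ∀ p, K p p = 0)
    (hK : ∀ p q, 0 ≤ K p q) (u v : V) :
    0 ≤ ∑ s : V → Bool, spin s u * spin s v * zfWeight K s := by
  set E := (univ : Finset (V × V)).filter (fun e => e.1 < e.2) with hE
  have hw : ∀ s : V → Bool, zfWeight K s
      = ∏ e ∈ E, (Real.cosh (K e.1 e.2) + spin s e.1 * spin s e.2 * Real.sinh (K e.1 e.2)) := by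
    intro s
    unfold zfWeight
    rw [half_double_sum (fun p q => K p q * spin s p * spin s q)
        (by intro p q; rw [hs p q]; ring)
        (by intro p; rw [hd p]; ring), Real.exp_sum]
    refine Finset.prod_congr rfl ?_
    intro e _
    have hε : spin s e.1 * spin s e.2 = 1 ∨ spin s e.1 * spin s e.2 = -1 := by
      unfold spin; cases s e.1 <;> cases s e.2 <;> norm_num
    rcases hε with h | h
    · rw [mul_assoc, h, mul_one, one_mul, Real.cosh_add_sinh]
    · rw [mul_assoc, h, mul_neg_one, neg_one_mul, ← sub_eq_add_neg, Real.cosh_sub_sinh]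
  simp only [hw]
  simp only [Finset.prod_add]
  have swap : ∑ s : V → Bool, spin s u * spin s v *
        ∑ T ∈ E.powerset, (∏ e ∈ T, Real.cosh (K e.1 e.2)) *
          ∏ e ∈ E \ T, spin s e.1 * spin s e.2 * Real.sinh (K e.1 e.2)
      = ∑ T ∈ E.powerset, ∑ s : V → Bool, spin s u * spin s v *
          ((∏ e ∈ T, Real.cosh (K e.1 e.2)) *
          ∏ e ∈ E \ T, spin s e.1 * spin s e.2 * Real.sinh (K e.1 e.2)) := by
    simp only [Finset.mul_sum]
    exact Finset.sum_comm
  rw [swap]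
  apply Finset.sum_nonneg
  intro T hT
  have hm : ∀ s : V → Bool, spin s u * spin s v *
        ((∏ e ∈ T, Real.cosh (K e.1 e.2)) *
          ∏ e ∈ E \ T, spin s e.1 * spin s e.2 * Real.sinh (K e.1 e.2))
      = ((((u ::ₘ v ::ₘ (E \ T).val.bind (fun e => e.1 ::ₘ {e.2}))).map (spin s)).prod) *
        ((∏ e ∈ T, Real.cosh (K e.1 e.2)) * ∏ e ∈ E \ T, Real.sinh (K e.1 e.2)) := by
    intro s
    rw [Finset.prod_mul_distrib]
    have hmono : (((u ::ₘ v ::ₘ (E \ T).val.bind (fun e => e.1 ::ₘ {e.2}))).map (spin s)).prod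
        = spin s u * (spin s v * ∏ e ∈ E \ T, spin s e.1 * spin s e.2) := by
      rw [Finset.prod_eq_multiset_prod]
      simp [Multiset.map_bind, Multiset.prod_bind, Multiset.map_map, Function.comp]
    rw [hmono]
    ring
  simp only [hm]
  rw [← Finset.sum_mul]
  apply mul_nonneg (sum_mono_nonneg _)
  apply mul_nonneg
  · exact Finset.prod_nonneg fun e _ => (Real.cosh_pos _).le
  · exact Finset.prod_nonneg fun e _ => Real.sinh_nonneg_iff.mpr (hK e.1 e.2)

/-- The xor (equivalently, ==) involution on configurations. -/
def beqEquiv {V : Type*} (s : V → Bool) : (V → Bool) ≃ (V → Bool) where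
  toFun a := fun p => s p == a p
  invFun a := fun p => s p == a p
  left_inv a := by funext p; cases hs : s p <;> cases ha : a p <;> simp [hs, ha]
  right_inv a := by funext p; cases hs : s p <;> cases ha : a p <;> simp [hs, ha]

lemma ginibre {V : Type*} [Fintype V] [DecidableEq V]
    (J J' : V → V → ℝ)
    (hsymm : ∀ p q, J p q = J q p) (hdiag : ∀ p, J p p = 0)
    (hsymm' : ∀ p q, J' p q = J' q p) (hdiag' : ∀ p, J' p p = 0)
    (hJ : ∀ p q, |J' p q| ≤ J p q) (u v : V) (ε : ℝ) (hε : |ε| ≤ 1) :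
    0 ≤ (∑ s : V → Bool, spin s u * spin s v * zfWeight J s) * (∑ t : V → Bool, zfWeight J' t)
      + ε * ((∑ t : V → Bool, spin t u * spin t v * zfWeight J' t) *
          (∑ s : V → Bool, zfWeight J s)) := by
  letI : LinearOrder V := LinearOrder.lift' (Fintype.equivFin V) (Fintype.equivFin V).injective
  have hweight : ∀ s a : V → Bool,
      zfWeight J s * zfWeight J' (fun p => s p == a p)
        = zfWeight (fun p q => J p q + J' p q * spin a p * spin a q) s := by
    intro s a
    unfold zfWeight
    rw [← Real.exp_add]
    congr 1
    rw [← mul_add, ← Finset.sum_add_distrib]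
    refine congrArg _ (Finset.sum_congr rfl fun p _ => ?_)
    rw [← Finset.sum_add_distrib]
    refine Finset.sum_congr rfl fun q _ => ?_
    rw [spin_beq, spin_beq]
    ring
  have key : (∑ s : V → Bool, spin s u * spin s v * zfWeight J s) *
        (∑ t : V → Bool, zfWeight J' t)
      + ε * ((∑ t : V → Bool, spin t u * spin t v * zfWeight J' t) *
          (∑ s : V → Bool, zfWeight J s))
      = ∑ s : V → Bool, ∑ a : V → Bool, (1 + ε * (spin a u * spin a v)) *
          (spin s u * spin s v *
            zfWeight (fun p q => J p q + J' p q * spin a p * spin a q) s) := by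
    calc (∑ s : V → Bool, spin s u * spin s v * zfWeight J s) *
        (∑ t : V → Bool, zfWeight J' t)
      + ε * ((∑ t : V → Bool, spin t u * spin t v * zfWeight J' t) *
          (∑ s : V → Bool, zfWeight J s))
        = ∑ s : V → Bool, ∑ t : V → Bool,
            (spin s u * spin s v + ε * (spin t u * spin t v)) *
              (zfWeight J s * zfWeight J' t) := by
          rw [Finset.sum_mul_sum, Finset.sum_mul_sum]
          rw [Finset.sum_comm (s := (univ : Finset (V → Bool)))
            (t := (univ : Finset (V → Bool)))
            (f := fun t s => (spin t u * spin t v * zfWeight J' t) * zfWeight J s)]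
          rw [Finset.mul_sum]
          simp only [Finset.mul_sum]
          rw [← Finset.sum_add_distrib]
          refine Finset.sum_congr rfl fun s _ => ?_
          rw [← Finset.sum_add_distrib]
          refine Finset.sum_congr rfl fun t _ => ?_
          ring
      _ = ∑ s : V → Bool, ∑ a : V → Bool,
            (spin s u * spin s v + ε * (spin (fun p => s p == a p) u *
              spin (fun p => s p == a p) v)) *
              (zfWeight J s * zfWeight J' (fun p => s p == a p)) := by
          refine Finset.sum_congr rfl fun s _ => ?_
          exact (Fintype.sum_equiv (beqEquiv s) _ _ (fun a => rfl)).symm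
      _ = _ := by
          refine Finset.sum_congr rfl fun s _ => Finset.sum_congr rfl fun a _ => ?_
          rw [hweight s a, spin_beq, spin_beq]
          ring
  rw [key, Finset.sum_comm]
  apply Finset.sum_nonneg
  intro a _
  rw [← Finset.mul_sum]
  apply mul_nonneg
  · have h1 : |ε * (spin a u * spin a v)| ≤ 1 := by
      rw [abs_mul, abs_mul, abs_spin, abs_spin]
      simpa using hε
    have := neg_abs_le (ε * (spin a u * spin a v))
    linarith
  · apply gks1
    · intro p q; rw [hsymm p q, hsymm' p q]; ring
    · intro p; rw [hdiag p, hdiag' p]; ring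
    · intro p q
      have h2 : |J' p q * spin a p * spin a q| = |J' p q| := by
        rw [abs_mul, abs_mul, abs_spin, abs_spin, mul_one, mul_one]
      have h3 := neg_abs_le (J' p q * spin a p * spin a q)
      have := hJ p q
      rw [h2] at h3
      linarith

/-- If `J_{pq} ≥ |J'_{pq}|` then `⟨σ_u σ_v⟩_J + ⟨σ_u σ_v⟩_{J'} ≥ 0`, and consequently
`|⟨σ_u σ_v⟩_{J'}| ≤ ⟨σ_u σ_v⟩_J`. -/
theorem two_point_comparison {V : Type*} [Fintype V] [DecidableEq V] [Nonempty V]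
    (J J' : V → V → ℝ)
    (hsymm : ∀ p q, J p q = J q p) (hdiag : ∀ p, J p p = 0)
    (hsymm' : ∀ p q, J' p q = J' q p) (hdiag' : ∀ p, J' p p = 0)
    (hJ : ∀ p q, |J' p q| ≤ J p q)
    (u v : V) :
    0 ≤ zfExpect J (fun σ => σ u * σ v) + zfExpect J' (fun σ => σ u * σ v) ∧
    |zfExpect J' (fun σ => σ u * σ v)| ≤ zfExpect J (fun σ => σ u * σ v) := by
  have hZ : 0 < ∑ s : V → Bool, zfWeight J s :=
    Finset.sum_pos (fun s _ => Real.exp_pos _) Finset.univ_nonempty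
  have hZ' : 0 < ∑ s : V → Bool, zfWeight J' s :=
    Finset.sum_pos (fun s _ => Real.exp_pos _) Finset.univ_nonempty
  have hX : zfExpect J (fun σ => σ u * σ v)
      = (∑ s : V → Bool, spin s u * spin s v * zfWeight J s) / ∑ s : V → Bool, zfWeight J s :=
    rfl
  have hY : zfExpect J' (fun σ => σ u * σ v)
      = (∑ s : V → Bool, spin s u * spin s v * zfWeight J' s) / ∑ s : V → Bool, zfWeight J' s :=
    rfl
  set X := ∑ s : V → Bool, spin s u * spin s v * zfWeight J s with hXdef
  set Y := ∑ s : V → Bool, spin s u * spin s v * zfWeight J' s with hYdef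
  set Z := ∑ s : V → Bool, zfWeight J s with hZdef
  set Z' := ∑ s : V → Bool, zfWeight J' s with hZ'def
  have h1 : 0 ≤ X * Z' + 1 * (Y * Z) :=
    ginibre J J' hsymm hdiag hsymm' hdiag' hJ u v 1 (by norm_num)
  have h2 : 0 ≤ X * Z' + (-1) * (Y * Z) :=
    ginibre J J' hsymm hdiag hsymm' hdiag' hJ u v (-1) (by norm_num)
  rw [hX, hY]
  constructor
  · rw [div_add_div _ _ hZ.ne' hZ'.ne']
    apply div_nonneg _ (by positivity)
    nlinarith [h1]
  · rw [abs_le]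
    constructor
    · rw [show -(X / Z) = (-X) / Z by ring, div_le_div_iff₀ hZ hZ']
      nlinarith [h1]
    · rw [div_le_div_iff₀ hZ' hZ]
      nlinarith [h2]
end
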